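/- Let η > 0 be real and let A and B be n×n real symmetric positive definite matrices; put S = (A+B)/2, M = √(S⁻¹)·((A−B)/2)·√(S⁻¹), and let l₁,…,lₙ be the (real) eigenvalues of the symmetric matrix M with multiplicity. Then 2^{ηn} · det(A)^{η/2} · det(B)^{η/2} / det(A+B)^η = ∏_{j=1}^n (1 − l_j²)^{η/2}, where all powers are real powers of positive real numbers. -/

import Mathlib

/-!
Put `R = √(S⁻¹)`, so that `R S R = 1`. Then `1 + M = R A R` and `1 - M = R B R` are positive
definite, which forces `|lⱼ| < 1`, and
`∏ (1 - lⱼ²) = det (1 + M) det (1 - M) = det R ⁴ det A det B = 4ⁿ det A det B / det (A + B)²`.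
Raising this to the power `η / 2` gives the likelihood ratio.
-/

namespace Matrix.PosSemidef

open scoped ComplexOrder

/-- The positive semidefinite square root of a positive semidefinite matrix
(the definition removed from Mathlib, restored with its old meaning). -/
noncomputable def sqrt {n : Type*} [Fintype n] [DecidableEq n] {𝕜 : Type*} [RCLike 𝕜]
    {A : Matrix n n 𝕜} (hA : A.PosSemidef) : Matrix n n 𝕜 :=
  hA.1.eigenvectorUnitary.1 * Matrix.diagonal ((↑) ∘ (Real.sqrt ·) ∘ hA.1.eigenvalues) *
    (star hA.1.eigenvectorUnitary : Matrix n n 𝕜)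

end Matrix.PosSemidef

open scoped MatrixOrder ComplexOrder

namespace Matrix

variable {n 𝕜 : Type*} [Fintype n] [DecidableEq n] [RCLike 𝕜]

theorem PosSemidef.sqrt_eq_cfcSqrt {A : Matrix n n 𝕜} (hA : A.PosSemidef) :
    hA.sqrt = CFC.sqrt A := by
  rw [CFC.sqrt_eq_cfc, cfc_nnreal_eq_real _ A, hA.1.cfc_eq, IsHermitian.cfc,
    Unitary.conjStarAlgAut_apply]
  unfold PosSemidef.sqrt
  congr 3
  funext i
  simp [Real.coe_sqrt, hA.eigenvalues_nonneg]

theorem PosSemidef.sqrt_mul_sqrt {A : Matrix n n 𝕜} (hA : A.PosSemidef) :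
    hA.sqrt * hA.sqrt = A := by
  rw [hA.sqrt_eq_cfcSqrt]
  exact CFC.sqrt_mul_sqrt_self A hA.nonneg

theorem PosSemidef.isHermitian_sqrt {A : Matrix n n 𝕜} (hA : A.PosSemidef) :
    hA.sqrt.IsHermitian := by
  rw [hA.sqrt_eq_cfcSqrt]
  exact (nonneg_iff_posSemidef.mp (CFC.sqrt_nonneg A)).isHermitian

theorem IsHermitian.cfc_one_add_mul {M : Matrix n n 𝕜} (hM : M.IsHermitian) (c : ℝ) :
    cfc (fun x => 1 + c * x) M = 1 + c • M := by
  rw [cfc_const_add 1 _ M, cfc_const_mul c _ M, cfc_id' ℝ M, map_one]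

theorem IsHermitian.det_one_add_smul {M : Matrix n n 𝕜} (hM : M.IsHermitian) (c : ℝ) :
    (1 + c • M).det = ∏ i, ((1 + c * hM.eigenvalues i : ℝ) : 𝕜) := by
  rw [← hM.cfc_one_add_mul, hM.cfc_eq, IsHermitian.cfc]
  simp [-Unitary.conjStarAlgAut_apply, det_diagonal]

theorem IsHermitian.posDef_one_add_smul_iff {M : Matrix n n 𝕜} (hM : M.IsHermitian) (c : ℝ) :
    (1 + c • M).PosDef ↔ ∀ i, 0 < 1 + c * hM.eigenvalues i := by
  rw [← hM.cfc_one_add_mul, hM.cfc_eq, IsHermitian.cfc, Unitary.conjStarAlgAut_apply]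
  simp only [IsUnit.posDef_star_right_conjugate_iff Unitary.isUnit_coe, posDef_diagonal_iff,
    Function.comp_apply, map_add, map_one, map_mul]
  norm_cast

theorem mul_mul_eq_one_of_mul_self_eq_inv {α : Type*} [CommRing α] {R S : Matrix n n α}
    (hRR : R * R = S⁻¹) (hS : IsUnit S.det) : R * S * R = 1 :=
  mul_eq_one_comm.mp (by rw [← mul_assoc, hRR, nonsing_inv_mul S hS])

section HalfSumConjugation

variable {A B R : Matrix n n ℝ}

theorem one_add_conj_half_sub_eq (hRSR : R * ((2 : ℝ)⁻¹ • (A + B)) * R = 1) :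
    1 + R * ((2 : ℝ)⁻¹ • (A - B)) * R = R * A * R := by
  rw [← hRSR, ← add_mul, ← mul_add]
  congr 2
  module

theorem one_sub_conj_half_sub_eq (hRSR : R * ((2 : ℝ)⁻¹ • (A + B)) * R = 1) :
    1 - R * ((2 : ℝ)⁻¹ • (A - B)) * R = R * B * R := by
  rw [← hRSR, ← sub_mul, ← mul_sub]
  congr 2
  module

theorem abs_eigenvalues_conj_half_sub_lt_one (hA : A.PosDef) (hB : B.PosDef) (hR : R.IsHermitian)
    (hRSR : R * ((2 : ℝ)⁻¹ • (A + B)) * R = 1)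
    (hM : (R * ((2 : ℝ)⁻¹ • (A - B)) * R).IsHermitian) (j : n) :
    |hM.eigenvalues j| < 1 := by
  have hRunit : IsUnit R :=
    (isUnit_iff_isUnit_det R).mpr (isUnit_det_of_right_inverse (B := _ * R) (by rwa [← mul_assoc]))
  have hRinj : Function.Injective R.mulVec := mulVec_injective_iff_isUnit.mpr hRunit
  have hRAR : (R * A * R).PosDef := by
    simpa only [hR.eq] using hA.conjTranspose_mul_mul_same hRinj
  have hRBR : (R * B * R).PosDef := by
    simpa only [hR.eq] using hB.conjTranspose_mul_mul_same hRinj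
  rw [← one_add_conj_half_sub_eq hRSR, ← one_smul ℝ (R * _ * R),
    hM.posDef_one_add_smul_iff] at hRAR
  rw [← one_sub_conj_half_sub_eq hRSR, sub_eq_add_neg, ← neg_one_smul ℝ (R * _ * R),
    hM.posDef_one_add_smul_iff] at hRBR
  exact abs_lt.mpr ⟨by linarith [hRAR j], by linarith [hRBR j]⟩

theorem prod_one_sub_sq_eigenvalues_conj_half_sub (hRSR : R * ((2 : ℝ)⁻¹ • (A + B)) * R = 1)
    (hM : (R * ((2 : ℝ)⁻¹ • (A - B)) * R).IsHermitian) :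
    ∏ j, (1 - hM.eigenvalues j ^ 2) = 4 ^ Fintype.card n * A.det * B.det / (A + B).det ^ 2 := by
  set d := (A + B).det
  have hdet : R.det ^ 2 * d = 2 ^ Fintype.card n := by
    have := congrArg det hRSR
    rw [det_mul, det_mul, det_smul, det_one, inv_pow] at this
    field_simp at this
    linear_combination this
  have hd : d ≠ 0 := right_ne_zero_of_mul (hdet ▸ pow_ne_zero _ two_ne_zero)
  have hprod : ∏ j, (1 - hM.eigenvalues j ^ 2) = R.det ^ 4 * A.det * B.det := by
    have hfactor : ∀ j, 1 - hM.eigenvalues j ^ 2 =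
        (1 + 1 * hM.eigenvalues j) * (1 + -1 * hM.eigenvalues j) := fun j => by ring
    simp_rw [hfactor, Finset.prod_mul_distrib]
    have h₁ := hM.det_one_add_smul 1
    have h₂ := hM.det_one_add_smul (-1)
    simp only [RCLike.ofReal_real_eq_id, id] at h₁ h₂
    rw [← h₁, ← h₂, one_smul, neg_one_smul, ← sub_eq_add_neg, one_add_conj_half_sub_eq hRSR,
      one_sub_conj_half_sub_eq hRSR, det_mul, det_mul, det_mul, det_mul]
    ring
  calc ∏ j, (1 - hM.eigenvalues j ^ 2) = (R.det ^ 2 * d) ^ 2 * A.det * B.det / d ^ 2 := by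
        rw [hprod]; field_simp
    _ = 4 ^ Fintype.card n * A.det * B.det / d ^ 2 := by
        rw [hdet, ← pow_mul, mul_comm (Fintype.card n), pow_mul]; norm_num

end HalfSumConjugation

end Matrix

theorem Real.four_pow_mul_mul_div_sq_rpow_half {a b d : ℝ} (ha : 0 ≤ a) (hb : 0 ≤ b) (hd : 0 < d)
    (k : ℕ) (η : ℝ) :
    (4 ^ k * a * b / d ^ 2) ^ (η / 2) = 2 ^ (η * k) * a ^ (η / 2) * b ^ (η / 2) / d ^ η := by
  have h4 : ((4 : ℝ) ^ k) ^ (η / 2) = 2 ^ (η * k) := by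
    rw [show (4 : ℝ) ^ k = 2 ^ (2 * k : ℝ) by norm_cast; rw [pow_mul]; norm_num,
      ← Real.rpow_mul zero_le_two]
    ring_nf
  have hd2 : (d ^ 2) ^ (η / 2) = d ^ η := by
    rw [← Real.rpow_natCast, ← Real.rpow_mul hd.le]
    ring_nf
  rw [Real.div_rpow (by positivity) (by positivity), Real.mul_rpow (by positivity) hb,
    Real.mul_rpow (by positivity) ha, h4, hd2]

theorem bartlett_likelihood_ratio_general {n : ℕ} (η : ℝ)
    (A B : Matrix (Fin n) (Fin n) ℝ) (hA : A.PosDef) (hB : B.PosDef)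
    (S M : Matrix (Fin n) (Fin n) ℝ)
    (hS : S = (2 : ℝ)⁻¹ • (A + B)) (hSpd : S.PosDef)
    (hM : M = hSpd.inv.posSemidef.sqrt * ((2 : ℝ)⁻¹ • (A - B)) * hSpd.inv.posSemidef.sqrt)
    (hMh : M.IsHermitian) :
    (2 : ℝ) ^ (η * n) * A.det ^ (η / 2) * B.det ^ (η / 2) / (A + B).det ^ η =
      ∏ j, (1 - hMh.eigenvalues j ^ 2) ^ (η / 2) := by
  have hR := hSpd.inv.posSemidef.isHermitian_sqrt
  have hRSR := Matrix.mul_mul_eq_one_of_mul_self_eq_inv hSpd.inv.posSemidef.sqrt_mul_sqrt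
    ((Matrix.isUnit_iff_isUnit_det S).mp hSpd.isUnit)
  generalize hSpd.inv.posSemidef.sqrt = R at hR hRSR hM
  subst hS hM
  have hl j : 0 ≤ 1 - hMh.eigenvalues j ^ 2 := sub_nonneg.mpr <| le_of_lt <|
    (sq_lt_one_iff_abs_lt_one _).mpr <|
      Matrix.abs_eigenvalues_conj_half_sub_lt_one hA hB hR hRSR hMh j
  rw [Real.finsetProd_rpow _ _ fun j _ => hl j,
    Matrix.prod_one_sub_sq_eigenvalues_conj_half_sub hRSR hMh, Fintype.card_fin,
    Real.four_pow_mul_mul_div_sq_rpow_half hA.det_pos.le hB.det_pos.le (hA.add hB).det_pos]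

/-- For `η > 0` and `A`, `B` real symmetric positive definite, with `S = (A+B)/2`,
`M = √(S⁻¹)·((A−B)/2)·√(S⁻¹)` and `l₁, …, lₙ` the eigenvalues of the symmetric matrix `M`:
`2^{ηn} · det(A)^{η/2} · det(B)^{η/2} / det(A+B)^η = ∏ⱼ (1 − l_j²)^{η/2}`,
all powers being real powers of positive reals. -/
theorem bartlett_likelihood_ratio {n : ℕ} (η : ℝ) (hη : 0 < η)
    (A B : Matrix (Fin n) (Fin n) ℝ) (hA : A.PosDef) (hB : B.PosDef)
    (S M : Matrix (Fin n) (Fin n) ℝ)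
    (hS : S = (2 : ℝ)⁻¹ • (A + B)) (hSpd : S.PosDef)
    (hM : M = hSpd.inv.posSemidef.sqrt * ((2 : ℝ)⁻¹ • (A - B)) * hSpd.inv.posSemidef.sqrt)
    (hMh : M.IsHermitian) :
    (2 : ℝ) ^ (η * n) * A.det ^ (η / 2) * B.det ^ (η / 2) / (A + B).det ^ η =
      ∏ j, (1 - hMh.eigenvalues j ^ 2) ^ (η / 2) :=
  bartlett_likelihood_ratio_general η A B hA hB S M hS hSpd hM hMh
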